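/- Let G be a connected graph that is the union of three connected subgraphs G_1, G_2, G_3, each with at least 2 vertices, which pairwise intersect exactly in a single common vertex v_0. Let X be the Perron eigenvector of the distance matrix of G, and set S_1 = Σ_{v∈V(G_1)} x_v and S_2 = Σ_{v∈V(G_2)} x_v. For a vertex v_a ∈ V(G_2) with v_a ≠ v_0, let H be the graph obtained from G by detaching G_3 from v_0 and reattaching it at v_a (i.e., deleting all edges from v_0 to its neighbors in G_3 and adding edges from v_a to those same vertices). If S_1 ≥ S_2, then ϱ(H) > ϱ(G). -/

import Mathlib

open SimpleGraph

/-- The distance matrix of a graph: the (i,j)-entry is the graph distance between i and j. -/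
noncomputable def distMatrix {V : Type*} [Fintype V] (G : SimpleGraph V) : Matrix V V ℝ :=
  fun i j => (G.dist i j : ℝ)

/-- The distance spectral radius: the largest eigenvalue of the distance matrix. -/
noncomputable def distSpectralRadius {V : Type*} [Fintype V] (G : SimpleGraph V) : ℝ :=
  sSup {μ : ℝ | ∃ X : V → ℝ, X ≠ 0 ∧ (distMatrix G).mulVec X = μ • X}

/-- The distance Perron vector: the positive unit eigenvector of the distance matrix
corresponding to the distance spectral radius. -/
def IsDistPerronVector {V : Type*} [Fintype V] (G : SimpleGraph V) (X : V → ℝ) : Prop :=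
  (∀ v, 0 < X v) ∧ (∑ v, (X v) ^ 2 = 1) ∧
    (distMatrix G).mulVec X = distSpectralRadius G • X

/-- The graph `H` obtained from `G` by detaching the branch `G₃` from `v₀` and reattaching
it at `vₐ`: all edges from `v₀` to its neighbors in `G₃` are deleted and replaced by edges
from `vₐ` to those same vertices. -/
def reattach {V : Type*} (G : SimpleGraph V) (H₃ : G.Subgraph) (v₀ va : V) :
    SimpleGraph V :=
  SimpleGraph.fromRel (fun a b =>
    (G.Adj a b ∧
      ¬((a = v₀ ∧ b ∈ H₃.neighborSet v₀) ∨ (b = v₀ ∧ a ∈ H₃.neighborSet v₀))) ∨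
    (a = va ∧ b ∈ H₃.neighborSet v₀))

/-!
Put `C = V(G₃) \ {v₀}`. In `G` every edge between `C` and its complement ends at `v₀`, in `H` it
ends at `vₐ`. Distances of `H` are bounded below through potentials `f` that change by at most one
along each edge of `H`, since then `f w - f u ≤ d_H(u, w)`; gluing distance functions of `G` on `C`
and off `C` gives `d_G ≤ d_H` on `C × C` and on `Cᶜ × Cᶜ`, and for `u ∈ C`, `w ∉ C`
`d_H(u, w) ≥ d_G(u, v₀) + d_G(vₐ, w) ≥ d_G(u, w) + (d_G(vₐ, w) - d_G(v₀, w))`.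
Hence `XᵀD_H X - XᵀD_G X ≥ 2 (∑_C x) (∑_{w ∉ C} (d(vₐ, w) - d(v₀, w)) x_w)`. The bracket is at least
`d(v₀, vₐ)` on `V(G₁)`, because `v₀` separates `vₐ` from `G₁`, and at least `-d(v₀, vₐ)` on
`V(G₂)`; as `S₁ ≥ S₂` and `x_{v₀} > 0` the last sum is positive. Rayleigh's principle finishes:
`ϱ(H) ≥ XᵀD_H X > XᵀD_G X = ϱ(G)`.
-/

open Matrix MatrixOrder Finset

theorem Matrix.IsHermitian.dotProduct_mulVec_le_sSup {V : Type*} [Fintype V] {A : Matrix V V ℝ}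
    (hA : A.IsHermitian) (x : V → ℝ) :
    x ⬝ᵥ A *ᵥ x ≤ sSup {μ : ℝ | ∃ y : V → ℝ, y ≠ 0 ∧ A *ᵥ y = μ • y} * (x ⬝ᵥ x) := by
  classical
  set S := {μ : ℝ | ∃ y : V → ℝ, y ≠ 0 ∧ A *ᵥ y = μ • y}
  have hS : S = {μ | Module.End.HasEigenvalue (toLin' A) μ} := by
    ext μ
    simp only [S, Set.mem_ofPred_eq, Module.End.hasEigenvalue_iff, Submodule.ne_bot_iff,
      Module.End.mem_eigenspace_iff, Matrix.toLin'_apply]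
    exact exists_congr fun y => and_comm
  have hle : A ≤ algebraMap ℝ _ (sSup S) := by
    refine le_algebraMap_of_spectrum_le (fun μ hμ => le_csSup ?_ ?_) hA
    · exact hS ▸ (Module.End.finite_hasEigenvalue (toLin' A)).bddAbove
    · rw [← Matrix.spectrum_toLin', ← Module.End.hasEigenvalue_iff_mem_spectrum] at hμ
      exact hS ▸ hμ
  have hpsd := (Matrix.le_iff.mp hle).dotProduct_mulVec_nonneg x
  rw [Algebra.algebraMap_eq_smul_one, Matrix.sub_mulVec, Matrix.smul_mulVec, Matrix.one_mulVec,
    dotProduct_sub, dotProduct_smul, star_trivial, smul_eq_mul] at hpsd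
  linarith

theorem isHermitian_distMatrix {V : Type*} [Fintype V] (G : SimpleGraph V) :
    (distMatrix G).IsHermitian := by
  ext i j
  simp [distMatrix, SimpleGraph.dist_comm]

theorem dotProduct_distMatrix_mulVec {V : Type*} [Fintype V] (G : SimpleGraph V) (x : V → ℝ) :
    x ⬝ᵥ distMatrix G *ᵥ x = ∑ u, ∑ w, (G.dist u w : ℝ) * (x u * x w) := by
  simp only [dotProduct, mulVec, distMatrix, mul_sum]
  exact sum_congr rfl fun u _ => sum_congr rfl fun w _ => by ring

theorem dotProduct_distMatrix_mulVec_le {V : Type*} [Fintype V] (G : SimpleGraph V) {x : V → ℝ}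
    (hx : x ⬝ᵥ x = 1) : x ⬝ᵥ distMatrix G *ᵥ x ≤ distSpectralRadius G := by
  have := (isHermitian_distMatrix G).dotProduct_mulVec_le_sSup x
  rwa [hx, mul_one] at this

theorem IsDistPerronVector.dotProduct_self {V : Type*} [Fintype V] {G : SimpleGraph V}
    {X : V → ℝ} (hX : IsDistPerronVector G X) : X ⬝ᵥ X = 1 := by
  simpa [dotProduct, sq] using hX.2.1

theorem IsDistPerronVector.distSpectralRadius_eq {V : Type*} [Fintype V] {G : SimpleGraph V}
    {X : V → ℝ} (hX : IsDistPerronVector G X) :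
    distSpectralRadius G = X ⬝ᵥ distMatrix G *ᵥ X := by
  rw [hX.2.2, dotProduct_smul, smul_eq_mul, hX.dotProduct_self, mul_one]

namespace SimpleGraph

variable {V : Type*} {G : SimpleGraph V}

theorem Adj.abs_dist_sub_dist_le_one {a b : V} (h : G.Adj a b) (u : V) :
    |(G.dist u a : ℝ) - G.dist u b| ≤ 1 := by
  have hab : G.dist u b ≤ G.dist u a + 1 := by
    simpa [dist_eq_one_iff_adj.mpr h] using h.reachable.dist_triangle_right u
  have hba : G.dist u a ≤ G.dist u b + 1 := by
    simpa [dist_eq_one_iff_adj.mpr h.symm] using h.symm.reachable.dist_triangle_right u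
  rw [abs_sub_le_iff, sub_le_iff_le_add', sub_le_iff_le_add']
  exact ⟨by exact_mod_cast hba, by exact_mod_cast hab⟩

theorem Reachable.le_add_dist {f : V → ℝ} (hf : ∀ a b, G.Adj a b → |f a - f b| ≤ 1)
    {u w : V} (h : G.Reachable u w) : f w ≤ f u + G.dist u w := by
  obtain ⟨p, hp⟩ := h.exists_walk_length_eq_dist
  rw [← hp]
  clear hp h
  induction p with
  | nil => simp
  | cons hadj p ih =>
    rw [Walk.length_cons, Nat.cast_add, Nat.cast_one]
    linarith [(abs_sub_le_iff.mp (hf _ _ hadj)).2]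

theorem Reachable.piecewise_le_add_dist (S : Set V) [DecidablePred (· ∈ S)] {α β : V → ℝ}
    (hα : ∀ a b, G.Adj a b → a ∈ S → b ∈ S → |α a - α b| ≤ 1)
    (hβ : ∀ a b, G.Adj a b → a ∉ S → b ∉ S → |β a - β b| ≤ 1)
    (hαβ : ∀ a b, G.Adj a b → a ∈ S → b ∉ S → |α a - β b| ≤ 1)
    {u w : V} (h : G.Reachable u w) : S.piecewise α β w ≤ S.piecewise α β u + G.dist u w := by
  refine h.le_add_dist fun a b hab => ?_
  by_cases ha : a ∈ S <;> by_cases hb : b ∈ S <;>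
    simp only [Set.piecewise_eq_of_mem, Set.piecewise_eq_of_notMem, ha, hb, not_false_eq_true]
  · exact hα a b hab ha hb
  · exact hαβ a b hab ha hb
  · rw [abs_sub_comm]; exact hαβ b a hab.symm hb ha
  · exact hβ a b hab ha hb

theorem Reachable.of_forall_adj {K : SimpleGraph V} (hGK : ∀ a b, G.Adj a b → K.Reachable a b)
    {u w : V} (h : G.Reachable u w) : K.Reachable u w := by
  rw [reachable_eq_reflTransGen] at h
  induction h with
  | refl => rfl
  | tail _ hab ih => exact ih.trans (hGK _ _ hab)

end SimpleGraph

namespace SimpleGraph.Subgraph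

variable {V : Type*} {G : SimpleGraph V}

def IsBranchAt (H : G.Subgraph) (v : V) : Prop :=
  ∀ ⦃a b : V⦄, a ∈ H.verts → a ≠ v → G.Adj a b → H.Adj a b

theorem isBranchAt_of_sup_eq_top {H₁ H₂ H₃ : G.Subgraph} {v : V} (hunion : H₁ ⊔ H₂ ⊔ H₃ = ⊤)
    (h13 : H₁.verts ∩ H₃.verts = {v}) (h23 : H₂.verts ∩ H₃.verts = {v}) : H₃.IsBranchAt v := by
  intro a b ha hav hab
  have hsup : (H₁ ⊔ H₂ ⊔ H₃).Adj a b := hunion ▸ hab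
  rcases hsup with (h₁ | h₂) | h₃
  · exact absurd (h13.subset ⟨h₁.fst_mem, ha⟩) hav
  · exact absurd (h23.subset ⟨h₂.fst_mem, ha⟩) hav
  · exact h₃

variable {H : G.Subgraph} {v : V}

theorem Adj.snd_mem_verts_sdiff {x : V} (h : H.Adj v x) : x ∈ H.verts \ {v} :=
  ⟨h.snd_mem, h.adj_sub.ne'⟩

theorem IsBranchAt.eq_and_adj (hH : H.IsBranchAt v) {a b : V} (ha : a ∈ H.verts \ {v})
    (hb : b ∉ H.verts \ {v}) (hab : G.Adj a b) : b = v ∧ H.Adj v a := by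
  have hHab := hH ha.1 ha.2 hab
  have hbv : b = v := by_contra fun hbv => hb ⟨hHab.snd_mem, hbv⟩
  exact ⟨hbv, hbv ▸ hHab.symm⟩

theorem IsBranchAt.dist_add_dist_le (hH : H.IsBranchAt v) {u w : V} (hu : u ∈ H.verts \ {v})
    (hw : w ∉ H.verts \ {v}) (huw : G.Reachable u w) :
    (G.dist u v + G.dist v w : ℝ) ≤ G.dist u w := by
  classical
  have := huw.piecewise_le_add_dist (H.verts \ {v}) (α := fun x => (G.dist u x : ℝ))
    (β := fun x => G.dist u v + G.dist v x)
    (fun a b hab _ _ => hab.abs_dist_sub_dist_le_one u)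
    (fun a b hab _ _ => by simpa using hab.abs_dist_sub_dist_le_one v)
    (fun a b hab ha hb => by
      obtain rfl := (hH.eq_and_adj ha hb hab).1
      simpa using hab.abs_dist_sub_dist_le_one u)
  simpa [Set.piecewise_eq_of_mem _ _ _ hu, Set.piecewise_eq_of_notMem _ _ _ hw] using this

end SimpleGraph.Subgraph

namespace Finset

variable {ι : Type*}

theorem two_mul_sum_mul_sum_compl_le_sum_sum [Fintype ι] [DecidableEq ι] (s : Finset ι)
    {Δ : ι → ι → ℝ} {x e : ι → ℝ} (hx : ∀ i, 0 ≤ x i) (hΔ : ∀ i j, Δ i j = Δ j i)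
    (hin : ∀ i ∈ s, ∀ j ∈ s, 0 ≤ Δ i j) (hout : ∀ i ∉ s, ∀ j ∉ s, 0 ≤ Δ i j)
    (hcross : ∀ i ∈ s, ∀ j ∉ s, e j ≤ Δ i j) :
    2 * ((∑ i ∈ s, x i) * ∑ j ∈ sᶜ, e j * x j) ≤ ∑ i, ∑ j, Δ i j * (x i * x j) := by
  have hsplit (f : ι → ℝ) : ∑ i, f i = ∑ i ∈ s, f i + ∑ i ∈ sᶜ, f i := (s.sum_add_sum_compl f).symm
  have hin' : 0 ≤ ∑ i ∈ s, ∑ j ∈ s, Δ i j * (x i * x j) :=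
    sum_nonneg fun i hi => sum_nonneg fun j hj =>
      mul_nonneg (hin i hi j hj) (mul_nonneg (hx i) (hx j))
  have hout' : 0 ≤ ∑ i ∈ sᶜ, ∑ j ∈ sᶜ, Δ i j * (x i * x j) :=
    sum_nonneg fun i hi => sum_nonneg fun j hj =>
      mul_nonneg (hout i (mem_compl.mp hi) j (mem_compl.mp hj)) (mul_nonneg (hx i) (hx j))
  have hcross' : (∑ i ∈ s, x i) * ∑ j ∈ sᶜ, e j * x j ≤
      ∑ i ∈ s, ∑ j ∈ sᶜ, Δ i j * (x i * x j) := by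
    rw [sum_mul_sum]
    refine sum_le_sum fun i hi => sum_le_sum fun j hj => ?_
    have := mul_le_mul_of_nonneg_right (hcross i hi j (mem_compl.mp hj)) (mul_nonneg (hx i) (hx j))
    linarith
  have hsymm : ∑ i ∈ sᶜ, ∑ j ∈ s, Δ i j * (x i * x j) = ∑ i ∈ s, ∑ j ∈ sᶜ, Δ i j * (x i * x j) := by
    rw [sum_comm]
    refine sum_congr rfl fun i _ => sum_congr rfl fun j _ => ?_
    rw [hΔ, mul_comm (x j)]
  simp only [hsplit, sum_add_distrib]
  linarith

theorem sum_union_mul_pos [DecidableEq ι] {s t : Finset ι} {i₀ : ι} (hst : t ∩ s = {i₀})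
    {g x : ι → ℝ} {δ : ℝ} (hδ : 0 < δ) (hx : ∀ i, 0 < x i) (hs : ∀ i ∈ s, δ ≤ g i)
    (ht : ∀ i ∈ t, -δ ≤ g i) (hxst : ∑ i ∈ t, x i ≤ ∑ i ∈ s, x i) :
    0 < ∑ i ∈ s ∪ t, g i * x i := by
  have hts : ∑ i ∈ t \ s, x i = ∑ i ∈ t, x i - x i₀ := by
    rw [← sum_inter_add_sum_sdiff t s x, hst, sum_singleton]
    ring
  have hs' : δ * ∑ i ∈ s, x i ≤ ∑ i ∈ s, g i * x i := by
    rw [mul_sum]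
    exact sum_le_sum fun i hi => mul_le_mul_of_nonneg_right (hs i hi) (hx i).le
  have ht' : -δ * ∑ i ∈ t \ s, x i ≤ ∑ i ∈ t \ s, g i * x i := by
    rw [mul_sum]
    exact sum_le_sum fun i hi => mul_le_mul_of_nonneg_right (ht i (mem_sdiff.mp hi).1) (hx i).le
  rw [← union_sdiff_self_eq_union, sum_union disjoint_sdiff]
  nlinarith [hx i₀]

end Finset

namespace SimpleGraph

section Reattach

variable {V : Type*} {G : SimpleGraph V} {H : G.Subgraph} {v₀ va : V}

theorem reattach_adj_iff (hH : H.IsBranchAt v₀) (hva : va ∉ H.verts) {a b : V} :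
    (reattach G H v₀ va).Adj a b ↔
      ((a ∈ H.verts \ {v₀} ↔ b ∈ H.verts \ {v₀}) ∧ G.Adj a b) ∨
        (a = va ∧ H.Adj v₀ b) ∨ (b = va ∧ H.Adj v₀ a) := by
  have hN : ∀ {x}, H.Adj v₀ x → x ∈ H.verts \ {v₀} := Subgraph.Adj.snd_mem_verts_sdiff
  have hcross : ∀ {x y}, x ∈ H.verts \ {v₀} → y ∉ H.verts \ {v₀} → G.Adj x y →
      y = v₀ ∧ H.Adj v₀ x := hH.eq_and_adj
  have hvaC : va ∉ H.verts \ {v₀} := fun h => hva h.1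
  have hv₀C : v₀ ∉ H.verts \ {v₀} := fun h => h.2 rfl
  have hGsymm := G.adj_comm b a
  simp only [reattach, fromRel_adj, Subgraph.mem_neighborSet]
  generalize H.verts \ {v₀} = C at *
  grind [Adj.ne]

theorem reattach_adj_iff_of_mem_iff (hH : H.IsBranchAt v₀) (hva : va ∉ H.verts) {a b : V}
    (hab : a ∈ H.verts \ {v₀} ↔ b ∈ H.verts \ {v₀}) :
    (reattach G H v₀ va).Adj a b ↔ G.Adj a b := by
  have hN : ∀ {x}, H.Adj v₀ x → x ∈ H.verts \ {v₀} := Subgraph.Adj.snd_mem_verts_sdiff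
  have hvaC : va ∉ H.verts \ {v₀} := fun h => hva h.1
  rw [reattach_adj_iff hH hva]
  generalize H.verts \ {v₀} = C at *
  grind

theorem reattach_adj_of_mem_of_not_mem (hH : H.IsBranchAt v₀) (hva : va ∉ H.verts) {a b : V}
    (ha : a ∈ H.verts \ {v₀}) (hb : b ∉ H.verts \ {v₀}) (hab : (reattach G H v₀ va).Adj a b) :
    b = va ∧ H.Adj v₀ a := by
  have hN : ∀ {x}, H.Adj v₀ x → x ∈ H.verts \ {v₀} := Subgraph.Adj.snd_mem_verts_sdiff
  rw [reattach_adj_iff hH hva] at hab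
  generalize H.verts \ {v₀} = C at *
  grind

theorem reattach_connected (hG : G.Connected) (hH : H.IsBranchAt v₀) (hva : va ∉ H.verts)
    (hreach : (reattach G H v₀ va).Reachable v₀ va) : (reattach G H v₀ va).Connected := by
  have hcross : ∀ {a b}, a ∈ H.verts \ {v₀} → b ∉ H.verts \ {v₀} → G.Adj a b →
      (reattach G H v₀ va).Reachable a b := fun {a b} ha hb hab => by
    obtain ⟨hbv, hv₀a⟩ := hH.eq_and_adj ha hb hab
    rw [hbv]
    have hva_a : (reattach G H v₀ va).Adj va a :=
      (reattach_adj_iff hH hva).mpr (Or.inr (Or.inl ⟨rfl, hv₀a⟩))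
    exact hva_a.symm.reachable.trans hreach.symm
  refine (connected_iff _).mpr ⟨fun u w => (hG u w).of_forall_adj fun a b hab => ?_, hG.nonempty⟩
  by_cases ha : a ∈ H.verts \ {v₀} <;> by_cases hb : b ∈ H.verts \ {v₀}
  · exact ((reattach_adj_iff_of_mem_iff hH hva (iff_of_true ha hb)).mpr hab).reachable
  · exact hcross ha hb hab
  · exact (hcross hb ha hab.symm).symm
  · exact ((reattach_adj_iff_of_mem_iff hH hva (iff_of_false ha hb)).mpr hab).reachable

theorem Reachable.piecewise_le_add_dist_reattach (hH : H.IsBranchAt v₀) (hva : va ∉ H.verts)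
    [DecidablePred (· ∈ H.verts \ {v₀})] {α β : V → ℝ}
    (hα : ∀ a b, G.Adj a b → |α a - α b| ≤ 1) (hβ : ∀ a b, G.Adj a b → |β a - β b| ≤ 1)
    (hαβ : ∀ a, H.Adj v₀ a → |α a - β va| ≤ 1) {u w : V}
    (huw : (reattach G H v₀ va).Reachable u w) :
    (H.verts \ {v₀}).piecewise α β w ≤
      (H.verts \ {v₀}).piecewise α β u + (reattach G H v₀ va).dist u w := by
  refine huw.piecewise_le_add_dist _ (fun a b hab ha hb => ?_) (fun a b hab ha hb => ?_)
    (fun a b hab ha hb => ?_)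
  · exact hα a b ((reattach_adj_iff_of_mem_iff hH hva (iff_of_true ha hb)).mp hab)
  · exact hβ a b ((reattach_adj_iff_of_mem_iff hH hva (iff_of_false ha hb)).mp hab)
  · obtain ⟨rfl, ha'⟩ := reattach_adj_of_mem_of_not_mem hH hva ha hb hab
    exact hαβ a ha'

theorem reattach_reachable_of_connected (hH : H.IsBranchAt v₀) (hva : va ∉ H.verts)
    {H' : G.Subgraph} (hconn : H'.Connected) (hdisj : Disjoint H'.verts (H.verts \ {v₀}))
    {u w : V} (hu : u ∈ H'.verts) (hw : w ∈ H'.verts) : (reattach G H v₀ va).Reachable u w :=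
  (hconn.preconnected ⟨u, hu⟩ ⟨w, hw⟩).map
    (⟨Subtype.val, fun {x y} (hxy : H'.coe.Adj x y) => (reattach_adj_iff_of_mem_iff hH hva
      (iff_of_false (hdisj.notMem_of_mem_left x.2) (hdisj.notMem_of_mem_left y.2))).mpr
      hxy.adj_sub⟩ : H'.coe →g reattach G H v₀ va)

theorem dist_le_dist_reattach (hH : H.IsBranchAt v₀) (hva : va ∉ H.verts)
    (hK : (reattach G H v₀ va).Connected) {u w : V} (hu : u ∉ H.verts \ {v₀})
    (hw : w ∉ H.verts \ {v₀}) : G.dist u w ≤ (reattach G H v₀ va).dist u w := by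
  classical
  have := (hK u w).piecewise_le_add_dist_reattach hH hva
    (α := fun x => (G.dist u va + G.dist v₀ x : ℝ)) (β := fun x => (G.dist u x : ℝ))
    (fun a b hab => by simpa using hab.abs_dist_sub_dist_le_one v₀)
    (fun a b hab => hab.abs_dist_sub_dist_le_one u)
    (fun a ha => by simp [dist_eq_one_iff_adj.mpr ha.adj_sub])
  simp only [Set.piecewise_eq_of_notMem _ _ _ hu, Set.piecewise_eq_of_notMem _ _ _ hw,
    dist_self, Nat.cast_zero, zero_add] at this
  exact_mod_cast this

theorem piecewise_dist_le_dist_reattach [DecidablePred (· ∈ H.verts \ {v₀})]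
    (hH : H.IsBranchAt v₀) (hva : va ∉ H.verts)
    (hK : (reattach G H v₀ va).Connected) (u w : V) :
    let f := (H.verts \ {v₀}).piecewise (fun x => (G.dist u x : ℝ))
      (fun x => G.dist u v₀ + G.dist va x)
    f w ≤ f u + (reattach G H v₀ va).dist u w :=
  (hK u w).piecewise_le_add_dist_reattach hH hva
    (fun a b hab => hab.abs_dist_sub_dist_le_one u)
    (fun a b hab => by simpa using hab.abs_dist_sub_dist_le_one va)
    (fun a ha => by simpa [abs_sub_comm] using ha.adj_sub.abs_dist_sub_dist_le_one u)

theorem dist_add_dist_le_dist_reattach (hH : H.IsBranchAt v₀) (hva : va ∉ H.verts)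
    (hK : (reattach G H v₀ va).Connected) {u w : V} (hu : u ∈ H.verts \ {v₀})
    (hw : w ∉ H.verts \ {v₀}) :
    (G.dist u v₀ + G.dist va w : ℝ) ≤ (reattach G H v₀ va).dist u w := by
  classical
  simpa [Set.piecewise_eq_of_mem _ _ _ hu, Set.piecewise_eq_of_notMem _ _ _ hw] using
    piecewise_dist_le_dist_reattach hH hva hK u w

theorem dist_le_dist_reattach_of_mem (hH : H.IsBranchAt v₀) (hva : va ∉ H.verts)
    (hK : (reattach G H v₀ va).Connected) {u w : V} (hu : u ∈ H.verts \ {v₀})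
    (hw : w ∈ H.verts \ {v₀}) : G.dist u w ≤ (reattach G H v₀ va).dist u w := by
  classical
  have := piecewise_dist_le_dist_reattach hH hva hK u w
  simp only [Set.piecewise_eq_of_mem _ _ _ hu, Set.piecewise_eq_of_mem _ _ _ hw, dist_self,
    Nat.cast_zero, zero_add] at this
  exact_mod_cast this

theorem two_mul_sum_mul_sum_le_dotProduct_distMatrix_reattach_sub [Fintype V] [DecidableEq V]
    (hG : G.Connected) (hH : H.IsBranchAt v₀) (hva : va ∉ H.verts)
    (hK : (reattach G H v₀ va).Connected) {X : V → ℝ} (hX : ∀ v, 0 ≤ X v) :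
    2 * ((∑ u ∈ (Set.toFinite (H.verts \ {v₀})).toFinset, X u) *
        ∑ w ∈ (Set.toFinite (H.verts \ {v₀})).toFinsetᶜ, ((G.dist va w : ℝ) - G.dist v₀ w) * X w) ≤
      X ⬝ᵥ distMatrix (reattach G H v₀ va) *ᵥ X - X ⬝ᵥ distMatrix G *ᵥ X := by
  rw [dotProduct_distMatrix_mulVec, dotProduct_distMatrix_mulVec, ← sum_sub_distrib]
  simp_rw [← sum_sub_distrib, ← sub_mul]
  refine two_mul_sum_mul_sum_compl_le_sum_sum _ hX (fun u w => by simp only [dist_comm])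
    (fun u hu w hw => ?_) (fun u hu w hw => ?_) (fun u hu w hw => ?_)
  · rw [Set.Finite.mem_toFinset] at hu hw
    exact sub_nonneg.mpr (by exact_mod_cast dist_le_dist_reattach_of_mem hH hva hK hu hw)
  · rw [Set.Finite.mem_toFinset] at hu hw
    exact sub_nonneg.mpr (by exact_mod_cast dist_le_dist_reattach hH hva hK hu hw)
  · rw [Set.Finite.mem_toFinset] at hu hw
    have hcross := dist_add_dist_le_dist_reattach hH hva hK hu hw
    have htri : (G.dist u w : ℝ) ≤ G.dist u v₀ + G.dist v₀ w := by exact_mod_cast hG.dist_triangle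
    linarith

end Reattach

end SimpleGraph

theorem Set.compl_diff_singleton_eq_union {V : Type*} {A B C : Set V} {v : V}
    (hABC : A ∪ B ∪ C = Set.univ) (hAC : A ∩ C = {v}) (hBC : B ∩ C = {v}) (hvA : v ∈ A) :
    (C \ {v})ᶜ = A ∪ B := by
  ext x
  have hx : x ∈ A ∪ B ∪ C := hABC ▸ Set.mem_univ x
  have hxA : x ∈ A → x ∈ C → x = v := fun h h' => hAC.subset ⟨h, h'⟩
  have hxB : x ∈ B → x ∈ C → x = v := fun h h' => hBC.subset ⟨h, h'⟩
  simp only [Set.mem_compl_iff, Set.mem_sdiff, Set.mem_singleton_iff, Set.mem_union] at hx ⊢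
  grind

namespace SimpleGraph

variable {V : Type*} [Fintype V] [DecidableEq V] {G : SimpleGraph V}

theorem distSpectralRadius_lt_distSpectralRadius_reattach (hG : G.Connected) {H : G.Subgraph}
    {v₀ va : V} (hH : H.IsBranchAt v₀) (hva : va ∉ H.verts)
    (hreach : (reattach G H v₀ va).Reachable v₀ va) (hC : (H.verts \ {v₀}).Nonempty)
    {X : V → ℝ} (hX : IsDistPerronVector G X)
    (hE : 0 < ∑ w ∈ (Set.toFinite (H.verts \ {v₀})).toFinsetᶜ,
      ((G.dist va w : ℝ) - G.dist v₀ w) * X w) :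
    distSpectralRadius G < distSpectralRadius (reattach G H v₀ va) := by
  have hT : 0 < ∑ u ∈ (Set.toFinite (H.verts \ {v₀})).toFinset, X u :=
    sum_pos (fun u _ => hX.1 u) (by simpa using hC)
  have hgap := two_mul_sum_mul_sum_le_dotProduct_distMatrix_reattach_sub hG hH hva
    (reattach_connected hG hH hva hreach) (fun v => (hX.1 v).le)
  calc distSpectralRadius G = X ⬝ᵥ distMatrix G *ᵥ X := hX.distSpectralRadius_eq
    _ < X ⬝ᵥ distMatrix (reattach G H v₀ va) *ᵥ X := by nlinarith [mul_pos hT hE]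
    _ ≤ distSpectralRadius (reattach G H v₀ va) :=
      dotProduct_distMatrix_mulVec_le _ hX.dotProduct_self

theorem sum_compl_dist_sub_dist_mul_pos (hG : G.Connected) {H₁ H₂ H₃ : G.Subgraph} {v₀ va : V}
    (hunion : H₁ ⊔ H₂ ⊔ H₃ = ⊤) (h12 : H₁.verts ∩ H₂.verts = {v₀})
    (h13 : H₁.verts ∩ H₃.verts = {v₀}) (h23 : H₂.verts ∩ H₃.verts = {v₀})
    (hva : va ∈ H₂.verts) (hva0 : va ≠ v₀) {X : V → ℝ} (hX : ∀ v, 0 < X v)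
    (hS : ∑ v ∈ (Set.toFinite H₂.verts).toFinset, X v ≤
      ∑ v ∈ (Set.toFinite H₁.verts).toFinset, X v) :
    0 < ∑ w ∈ (Set.toFinite (H₃.verts \ {v₀})).toFinsetᶜ,
      ((G.dist va w : ℝ) - G.dist v₀ w) * X w := by
  have hv₀ : v₀ ∈ H₁.verts ∩ H₂.verts := h12 ▸ rfl
  have hB₂ : H₂.IsBranchAt v₀ := Subgraph.isBranchAt_of_sup_eq_top
    (by rwa [sup_right_comm] at hunion) h12 (by rwa [Set.inter_comm])
  have hverts : H₁.verts ∪ H₂.verts ∪ H₃.verts = Set.univ := by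
    simpa using congrArg Subgraph.verts hunion
  have hcompl : (Set.toFinite (H₃.verts \ {v₀})).toFinsetᶜ =
      (Set.toFinite H₁.verts).toFinset ∪ (Set.toFinite H₂.verts).toFinset := by
    ext x
    simpa using Set.ext_iff.mp (Set.compl_diff_singleton_eq_union hverts h13 h23 hv₀.1) x
  have h21 : (Set.toFinite H₂.verts).toFinset ∩ (Set.toFinite H₁.verts).toFinset = {v₀} := by
    ext x
    simpa [and_comm] using Set.ext_iff.mp h12 x
  rw [hcompl]
  refine sum_union_mul_pos h21 (δ := G.dist va v₀) (by exact_mod_cast hG.pos_dist_of_ne hva0)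
    hX (fun w hw => ?_) (fun w _ => ?_) hS
  · rw [Set.Finite.mem_toFinset] at hw
    have := hB₂.dist_add_dist_le ⟨hva, hva0⟩ (fun hw₂ => hw₂.2 (h12.subset ⟨hw, hw₂.1⟩))
      (hG va w)
    linarith
  · have htri : (G.dist v₀ w : ℝ) ≤ G.dist v₀ va + G.dist va w := by
      exact_mod_cast hG.dist_triangle
    rw [dist_comm (u := v₀) (v := va)] at htri
    linarith

end SimpleGraph

theorem stmt7_general {V : Type*} [Fintype V] (G : SimpleGraph V) (hG : G.Connected)
    (H₁ H₂ H₃ : G.Subgraph)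
    (v₀ va : V)
    (hunion : H₁ ⊔ H₂ ⊔ H₃ = (⊤ : G.Subgraph))
    (h12 : H₁.verts ∩ H₂.verts = {v₀}) (h13 : H₁.verts ∩ H₃.verts = {v₀})
    (h23 : H₂.verts ∩ H₃.verts = {v₀})
    (hc2 : H₂.Connected)
    (hn3 : H₃.verts.Nontrivial)
    (hva : va ∈ H₂.verts) (hva0 : va ≠ v₀)
    (X : V → ℝ) (hX : IsDistPerronVector G X)
    (hS : ∑ v ∈ (Set.toFinite H₁.verts).toFinset, X v ≥
          ∑ v ∈ (Set.toFinite H₂.verts).toFinset, X v) :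
    distSpectralRadius (reattach G H₃ v₀ va) > distSpectralRadius G := by
  classical
  have hB₃ : H₃.IsBranchAt v₀ := Subgraph.isBranchAt_of_sup_eq_top hunion h13 h23
  have hvaH₃ : va ∉ H₃.verts := fun h => hva0 (h23.subset ⟨hva, h⟩)
  have hH₂ : Disjoint H₂.verts (H₃.verts \ {v₀}) :=
    Set.disjoint_left.mpr fun x hx hxC => hxC.2 (h23.subset ⟨hx, hxC.1⟩)
  have hv₀ : v₀ ∈ H₂.verts := (h12 ▸ rfl : v₀ ∈ H₁.verts ∩ H₂.verts).2
  exact distSpectralRadius_lt_distSpectralRadius_reattach hG hB₃ hvaH₃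
    (reattach_reachable_of_connected hB₃ hvaH₃ hc2 hH₂ hv₀ hva) (hn3.exists_ne v₀)
    hX (sum_compl_dist_sub_dist_mul_pos hG hunion h12 h13 h23 hva hva0 hX.1 hS)

/-- Lemma 3.1: `G` is the union of three connected subgraphs `H₁, H₂, H₃`, each with at
least two vertices, pairwise meeting exactly in the single vertex `v₀`.  If the Perron
weight of `H₁` is at least that of `H₂`, then moving the branch `H₃` from `v₀` to a vertex
`vₐ ≠ v₀` of `H₂` strictly increases the distance spectral radius. -/
theorem stmt7 {V : Type*} [Fintype V] (G : SimpleGraph V) (hG : G.Connected)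
    (H₁ H₂ H₃ : G.Subgraph)
    (v₀ va : V)
    (hunion : H₁ ⊔ H₂ ⊔ H₃ = (⊤ : G.Subgraph))
    (h12 : H₁.verts ∩ H₂.verts = {v₀}) (h13 : H₁.verts ∩ H₃.verts = {v₀})
    (h23 : H₂.verts ∩ H₃.verts = {v₀})
    (hc1 : H₁.Connected) (hc2 : H₂.Connected) (hc3 : H₃.Connected)
    (hn1 : H₁.verts.Nontrivial) (hn2 : H₂.verts.Nontrivial) (hn3 : H₃.verts.Nontrivial)
    (hva : va ∈ H₂.verts) (hva0 : va ≠ v₀)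
    (X : V → ℝ) (hX : IsDistPerronVector G X)
    (hS : ∑ v ∈ (Set.toFinite H₁.verts).toFinset, X v ≥
          ∑ v ∈ (Set.toFinite H₂.verts).toFinset, X v) :
    distSpectralRadius (reattach G H₃ v₀ va) > distSpectralRadius G :=
  stmt7_general G hG H₁ H₂ H₃ v₀ va hunion h12 h13 h23 hc2 hn3 hva hva0 X hX hS
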